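/- arXiv:1812.03938 — 3 statements merged into one kernel-verified Lean document; each statement's English description precedes it below -/
import Mathlib

section
/- For every polynomial p in span{1, x, y, z, xz, yz} ⊂ ℝ[x,y,z], the integral of p over the reference prism T̂ = {(x,y,z) : x ≥ 0, y ≥ 0, x + y ≤ 1, 0 ≤ z ≤ 1} equals |T̂|·( (1/24)·Σ_v p(v) + (3/8)·(p(1/3,1/3,1/3) + p(1/3,1/3,2/3)) ), where the sum ranges over the six vertices v = (0,0,0), (1,0,0), (0,1,0), (0,0,1), (1,0,1), (0,1,1) of the prism, and |T̂| = 1/2. In other words, the quadrature rule on the reference prism with nodes at the six vertices (weights 1/24 each) and the two interior points (1/3,1/3,1/3), (1/3,1/3,2/3) (weights 3/8 each) is exact on P₁ ⊕ span{xz, yz}. -/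
open MvPolynomial MeasureTheory

lemma poly_int (p q r A B : ℝ) :
    ∫ x in A..B, (p + q * x + r * x ^ 2) =
      p * (B - A) + q * ((B ^ 2 - A ^ 2) / 2) + r * ((B ^ 3 - A ^ 3) / 3) := by
  have h1 : IntervalIntegrable (fun _ : ℝ => p) volume A B := intervalIntegrable_const
  have h2 : IntervalIntegrable (fun x : ℝ => q * x) volume A B := by
    apply Continuous.intervalIntegrable; continuity
  have h3 : IntervalIntegrable (fun x : ℝ => r * x ^ 2) volume A B := by
    apply Continuous.intervalIntegrable; continuity
  rw [intervalIntegral.integral_add (h1.add h2) h3, intervalIntegral.integral_add h1 h2,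
    intervalIntegral.integral_const, intervalIntegral.integral_const_mul,
    intervalIntegral.integral_const_mul, integral_id, integral_pow]
  push_cast
  simp [smul_eq_mul]
  ring

lemma prism_lin (a b c d e f : ℝ) :
    (∫ v in {v : ℝ × ℝ × ℝ |
        0 ≤ v.1 ∧ 0 ≤ v.2.1 ∧ v.1 + v.2.1 ≤ 1 ∧ v.2.2 ∈ Set.Icc (0 : ℝ) 1},
      (a + b * v.1 + c * v.2.1 + d * v.2.2 + e * (v.1 * v.2.2) + f * (v.2.1 * v.2.2))) =
      a / 2 + b / 6 + c / 6 + d / 4 + e / 12 + f / 12 := by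
  set S : Set (ℝ × ℝ × ℝ) := {v : ℝ × ℝ × ℝ |
      0 ≤ v.1 ∧ 0 ≤ v.2.1 ∧ v.1 + v.2.1 ≤ 1 ∧ v.2.2 ∈ Set.Icc (0 : ℝ) 1} with hS
  set F : ℝ × ℝ × ℝ → ℝ := fun v =>
      a + b * v.1 + c * v.2.1 + d * v.2.2 + e * (v.1 * v.2.2) + f * (v.2.1 * v.2.2) with hF
  have hFc : Continuous F := by fun_prop
  have hSm : MeasurableSet S := by
    have heq : S = {v : ℝ × ℝ × ℝ | 0 ≤ v.1} ∩ ({v | 0 ≤ v.2.1} ∩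
        ({v | v.1 + v.2.1 ≤ 1} ∩ {v | v.2.2 ∈ Set.Icc (0:ℝ) 1})) := rfl
    rw [heq]
    exact (measurableSet_le measurable_const measurable_fst).inter
      ((measurableSet_le measurable_const (measurable_fst.comp measurable_snd)).inter
        ((measurableSet_le (measurable_fst.add (measurable_fst.comp measurable_snd))
          measurable_const).inter
          ((measurable_snd.comp measurable_snd) measurableSet_Icc)))
  have hsub : S ⊆ Set.Icc ((0:ℝ), (0:ℝ), (0:ℝ)) (1, 1, 1) := by
    rintro ⟨x, y, z⟩ ⟨hx, hy, hxy, hz0, hz1⟩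
    simp only [Set.mem_Icc, Prod.mk_le_mk]
    exact ⟨⟨hx, hy, hz0⟩, ⟨by linarith, by linarith, hz1⟩⟩
  have hInt : IntegrableOn F S := by
    exact (hFc.continuousOn.integrableOn_compact isCompact_Icc).mono_set hsub
  have hIndInt : Integrable (S.indicator F) ((volume : Measure ℝ).prod (volume : Measure (ℝ × ℝ))) := by
    rw [← MeasureTheory.Measure.volume_eq_prod]
    exact (integrable_indicator_iff hSm).2 hInt
  show (∫ v in S, F v) = a / 2 + b / 6 + c / 6 + d / 4 + e / 12 + f / 12
  rw [← integral_indicator hSm, MeasureTheory.Measure.volume_eq_prod,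
    MeasureTheory.integral_prod _ hIndInt]
  have step : ∀ x : ℝ, (∫ w : ℝ × ℝ, S.indicator F (x, w)) =
      (Set.Icc (0:ℝ) 1).indicator
        (fun x => ∫ w in (Set.Icc (0:ℝ) (1 - x)) ×ˢ Set.Icc (0:ℝ) 1, F (x, w)) x := by
    intro x
    by_cases hx : x ∈ Set.Icc (0:ℝ) 1
    · rw [Set.indicator_of_mem hx,
        ← integral_indicator ((measurableSet_Icc.prod measurableSet_Icc))]
      congr 1
      ext w
      have hmem : (x, w) ∈ S ↔ w ∈ (Set.Icc (0:ℝ) (1 - x)) ×ˢ Set.Icc (0:ℝ) 1 := by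
        obtain ⟨hx0, hx1⟩ := hx
        simp only [hS, Set.mem_setOf_eq, Set.mem_prod, Set.mem_Icc]
        constructor
        · rintro ⟨_, h1, h2, h3⟩; exact ⟨⟨h1, by linarith⟩, h3⟩
        · rintro ⟨⟨h1, h2⟩, h3⟩; exact ⟨hx0, h1, by linarith, h3⟩
      by_cases hw : (x, w) ∈ S
      · rw [Set.indicator_of_mem hw, Set.indicator_of_mem (hmem.1 hw)]
      · rw [Set.indicator_of_notMem hw, Set.indicator_of_notMem (fun h => hw (hmem.2 h))]
    · rw [Set.indicator_of_notMem hx]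
      have : ∀ w : ℝ × ℝ, S.indicator F (x, w) = 0 := by
        intro w
        apply Set.indicator_of_notMem
        intro hw
        rcases hw with ⟨h1, h2, h3, h4⟩
        exact hx ⟨h1, by linarith⟩
      simp [this]
  simp only [step]
  rw [integral_indicator measurableSet_Icc]
  have inner : ∀ x ∈ Set.Icc (0:ℝ) 1,
      (∫ w in (Set.Icc (0:ℝ) (1 - x)) ×ˢ Set.Icc (0:ℝ) 1, F (x, w)) =
      (a + b * x + d / 2 + e * x / 2) * (1 - x) + (c + f / 2) * ((1 - x) ^ 2 / 2) := by
    intro x hx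
    obtain ⟨hx0, hx1⟩ := hx
    have hIntP : IntegrableOn (fun w : ℝ × ℝ => F (x, w))
        ((Set.Icc (0:ℝ) (1 - x)) ×ˢ Set.Icc (0:ℝ) 1) := by
      have : Continuous fun w : ℝ × ℝ => F (x, w) := by fun_prop
      exact this.continuousOn.integrableOn_compact (isCompact_Icc.prod isCompact_Icc)
    have hIntP' : IntegrableOn (fun w : ℝ × ℝ => F (x, w))
        ((Set.Icc (0:ℝ) (1 - x)) ×ˢ Set.Icc (0:ℝ) 1)
        ((volume : Measure ℝ).prod (volume : Measure ℝ)) := by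
      rwa [← MeasureTheory.Measure.volume_eq_prod]
    rw [MeasureTheory.Measure.volume_eq_prod, MeasureTheory.setIntegral_prod _ hIntP']
    have hz : ∀ y : ℝ, (∫ z in Set.Icc (0:ℝ) 1, F (x, (y, z))) =
        (a + b * x + c * y) + (d + e * x + f * y) / 2 := by
      intro y
      rw [MeasureTheory.integral_Icc_eq_integral_Ioc,
        ← intervalIntegral.integral_of_le (by norm_num : (0:ℝ) ≤ 1)]
      have : ∀ z : ℝ, F (x, (y, z)) =
          ((a + b * x + c * y) + (d + e * x + f * y) * z + 0 * z ^ 2) := by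
        intro z; simp [hF]; ring
      simp only [this]
      rw [poly_int]
      ring
    simp only [hz]
    rw [MeasureTheory.integral_Icc_eq_integral_Ioc,
      ← intervalIntegral.integral_of_le (by linarith : (0:ℝ) ≤ 1 - x)]
    have : ∀ y : ℝ, (a + b * x + c * y) + (d + e * x + f * y) / 2 =
        ((a + b * x + d / 2 + e * x / 2) + (c + f / 2) * y + 0 * y ^ 2) := by
      intro y; ring
    simp only [this]
    rw [poly_int]
    ring
  rw [MeasureTheory.setIntegral_congr_fun measurableSet_Icc inner]
  rw [MeasureTheory.integral_Icc_eq_integral_Ioc,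
    ← intervalIntegral.integral_of_le (by norm_num : (0:ℝ) ≤ 1)]
  have : ∀ x : ℝ, (a + b * x + d / 2 + e * x / 2) * (1 - x) + (c + f / 2) * ((1 - x) ^ 2 / 2) =
      ((a + d / 2 + c / 2 + f / 4) + (b - a - d / 2 + e / 2 - c - f / 2) * x +
        (-(b) - e / 2 + c / 2 + f / 4) * x ^ 2) := by
    intro x; ring
  simp only [this]
  rw [poly_int]
  ring

/-- The quadrature rule on the reference prism
`T̂ = {(x,y,z) : 0 ≤ x, 0 ≤ y, x + y ≤ 1, 0 ≤ z ≤ 1}` (of volume `1/2`) with nodes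
at the six vertices (weights `1/24` each) and the two interior points
`(1/3,1/3,1/3)`, `(1/3,1/3,2/3)` (weights `3/8` each) is exact on
`span{1, x, y, z, xz, yz} = P₁ ⊕ span{xz, yz}`. -/
theorem prism_quadrature_exact
    (p : MvPolynomial (Fin 3) ℝ)
    (hp : p ∈ Submodule.span ℝ
        ({1, X 0, X 1, X 2, X 0 * X 2, X 1 * X 2} : Set (MvPolynomial (Fin 3) ℝ))) :
    (∫ v in {v : ℝ × ℝ × ℝ |
        0 ≤ v.1 ∧ 0 ≤ v.2.1 ∧ v.1 + v.2.1 ≤ 1 ∧ v.2.2 ∈ Set.Icc (0 : ℝ) 1},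
        eval ![v.1, v.2.1, v.2.2] p) =
      (1 / 2 : ℝ) *
        ((1 / 24) * (eval ![(0 : ℝ), 0, 0] p + eval ![(1 : ℝ), 0, 0] p +
            eval ![(0 : ℝ), 1, 0] p + eval ![(0 : ℝ), 0, 1] p +
            eval ![(1 : ℝ), 0, 1] p + eval ![(0 : ℝ), 1, 1] p) +
          (3 / 8) * (eval ![(1 / 3 : ℝ), 1 / 3, 1 / 3] p +
            eval ![(1 / 3 : ℝ), 1 / 3, 2 / 3] p)) := by
  have hrep : ∃ a b c d e f : ℝ, ∀ x y z : ℝ,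
      eval ![x, y, z] p = a + b * x + c * y + d * z + e * (x * z) + f * (y * z) := by
    induction hp using Submodule.span_induction with
    | mem q hq =>
      simp only [Set.mem_insert_iff, Set.mem_singleton_iff] at hq
      rcases hq with rfl | rfl | rfl | rfl | rfl | rfl
      · exact ⟨1, 0, 0, 0, 0, 0, fun x y z => by simp⟩
      · exact ⟨0, 1, 0, 0, 0, 0, fun x y z => by simp⟩
      · exact ⟨0, 0, 1, 0, 0, 0, fun x y z => by simp⟩
      · exact ⟨0, 0, 0, 1, 0, 0, fun x y z => by simp⟩
      · exact ⟨0, 0, 0, 0, 1, 0, fun x y z => by simp⟩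
      · exact ⟨0, 0, 0, 0, 0, 1, fun x y z => by simp⟩
    | zero => exact ⟨0, 0, 0, 0, 0, 0, fun x y z => by simp⟩
    | add q r _ _ hq hr =>
      obtain ⟨a1, b1, c1, d1, e1, f1, h1⟩ := hq
      obtain ⟨a2, b2, c2, d2, e2, f2, h2⟩ := hr
      exact ⟨a1 + a2, b1 + b2, c1 + c2, d1 + d2, e1 + e2, f1 + f2, fun x y z => by
        simp [h1, h2]; ring⟩
    | smul r q _ hq =>
      obtain ⟨a1, b1, c1, d1, e1, f1, h1⟩ := hq
      exact ⟨r * a1, r * b1, r * c1, r * d1, r * e1, r * f1, fun x y z => by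
        simp [MvPolynomial.smul_eval, h1]; ring⟩
  obtain ⟨a, b, c, d, e, f, h⟩ := hrep
  simp only [h]
  rw [prism_lin]
  ring
end

section
/- The set { ∂v₁/∂x + ∂v₂/∂y : (v₁,v₂) ∈ span_ℝ{Φ₁,…,Φ₁₀} } of divergences of elements of the span of Φ₁,…,Φ₁₀ equals P₁(ℝ²), the space of real polynomials in x, y of total degree at most 1; that is, div BDFM₂(T̂) = P₁. -/
open MvPolynomial

/-- The ten `BDFM₂` basis functions on the reference square, as vector-valued
polynomials in `ℝ[x,y]²` (`x = X 0`, `y = X 1`). -/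
noncomputable def PhiBDFM : Fin 10 → MvPolynomial (Fin 2) ℝ × MvPolynomial (Fin 2) ℝ :=
  ![(2 * X 0 ^ 2 - 2 * X 0 * X 1, 0),
    (2 * X 0 ^ 2 + 2 * X 0 * X 1 - 2 * X 0, 0),
    (0, 2 * X 1 ^ 2 + 2 * X 0 * X 1 - 2 * X 1),
    (0, 2 * X 1 ^ 2 - 2 * X 0 * X 1),
    (-2 * X 0 ^ 2 + 2 * X 0 * X 1 + 2 * X 0 - 2 * X 1, 0),
    (-2 * X 0 ^ 2 - 2 * X 0 * X 1 + 4 * X 0 + 2 * X 1 - 2, 0),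
    (0, -2 * X 1 ^ 2 - 2 * X 0 * X 1 + 2 * X 0 + 4 * X 1 - 2),
    (0, -2 * X 1 ^ 2 + 2 * X 0 * X 1 - 2 * X 0 + 2 * X 1),
    (X 0 ^ 2 - X 0, 0),
    (0, X 1 ^ 2 - X 1)]


/-- The divergence as a linear map. -/
noncomputable def divLM : MvPolynomial (Fin 2) ℝ × MvPolynomial (Fin 2) ℝ →ₗ[ℝ] MvPolynomial (Fin 2) ℝ :=
  (pderiv 0).toLinearMap.comp (LinearMap.fst ℝ _ _) +
    (pderiv 1).toLinearMap.comp (LinearMap.snd ℝ _ _)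

lemma divLM_apply (v : MvPolynomial (Fin 2) ℝ × MvPolynomial (Fin 2) ℝ) :
    divLM v = pderiv 0 v.1 + pderiv 1 v.2 := rfl

lemma hC2 : (2 : MvPolynomial (Fin 2) ℝ) = C 2 := by simp [map_ofNat]
lemma hC4 : (4 : MvPolynomial (Fin 2) ℝ) = C 4 := by simp [map_ofNat]

set_option linter.unreachableTactic false
set_option linter.unusedTactic false

lemma div0 : divLM (PhiBDFM 0) = 4 * X 0 - 2 * X 1 := by
  rw [show PhiBDFM 0 = (2 * X 0 ^ 2 - 2 * X 0 * X 1, 0) from rfl, divLM_apply]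
  simp [pderiv_mul, pderiv_pow, pderiv_X, hC2, hC4, pderiv_C]
  all_goals (simp only [← hC2, ← hC4]; ring)

lemma div1 : divLM (PhiBDFM 1) = 4 * X 0 + 2 * X 1 - 2 := by
  rw [show PhiBDFM 1 = (2 * X 0 ^ 2 + 2 * X 0 * X 1 - 2 * X 0, 0) from rfl, divLM_apply]
  simp [pderiv_mul, pderiv_pow, pderiv_X, hC2, hC4, pderiv_C]
  all_goals (simp only [← hC2, ← hC4]; ring)

lemma div2 : divLM (PhiBDFM 2) = 2 * X 0 + 4 * X 1 - 2 := by
  rw [show PhiBDFM 2 = (0, 2 * X 1 ^ 2 + 2 * X 0 * X 1 - 2 * X 1) from rfl, divLM_apply]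
  simp [pderiv_mul, pderiv_pow, pderiv_X, hC2, hC4, pderiv_C]
  all_goals (simp only [← hC2, ← hC4]; ring)

lemma div3 : divLM (PhiBDFM 3) = 4 * X 1 - 2 * X 0 := by
  rw [show PhiBDFM 3 = (0, 2 * X 1 ^ 2 - 2 * X 0 * X 1) from rfl, divLM_apply]
  simp [pderiv_mul, pderiv_pow, pderiv_X, hC2, hC4, pderiv_C]
  all_goals (simp only [← hC2, ← hC4]; ring)

lemma div4 : divLM (PhiBDFM 4) = -4 * X 0 + 2 * X 1 + 2 := by
  rw [show PhiBDFM 4 = (-2 * X 0 ^ 2 + 2 * X 0 * X 1 + 2 * X 0 - 2 * X 1, 0) from rfl, divLM_apply]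
  simp [pderiv_mul, pderiv_pow, pderiv_X, hC2, hC4, pderiv_C]
  all_goals (simp only [← hC2, ← hC4]; ring)

lemma div5 : divLM (PhiBDFM 5) = -4 * X 0 - 2 * X 1 + 4 := by
  rw [show PhiBDFM 5 = (-2 * X 0 ^ 2 - 2 * X 0 * X 1 + 4 * X 0 + 2 * X 1 - 2, 0) from rfl, divLM_apply]
  simp [pderiv_mul, pderiv_pow, pderiv_X, hC2, hC4, pderiv_C]
  all_goals (simp only [← hC2, ← hC4]; ring)

lemma div6 : divLM (PhiBDFM 6) = -2 * X 0 - 4 * X 1 + 4 := by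
  rw [show PhiBDFM 6 = (0, -2 * X 1 ^ 2 - 2 * X 0 * X 1 + 2 * X 0 + 4 * X 1 - 2) from rfl, divLM_apply]
  simp [pderiv_mul, pderiv_pow, pderiv_X, hC2, hC4, pderiv_C]
  all_goals (simp only [← hC2, ← hC4]; ring)

lemma div7 : divLM (PhiBDFM 7) = 2 * X 0 - 4 * X 1 + 2 := by
  rw [show PhiBDFM 7 = (0, -2 * X 1 ^ 2 + 2 * X 0 * X 1 - 2 * X 0 + 2 * X 1) from rfl, divLM_apply]
  simp [pderiv_mul, pderiv_pow, pderiv_X, hC2, hC4, pderiv_C]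
  all_goals (simp only [← hC2, ← hC4]; ring)

lemma div8 : divLM (PhiBDFM 8) = 2 * X 0 - 1 := by
  rw [show PhiBDFM 8 = (X 0 ^ 2 - X 0, 0) from rfl, divLM_apply]
  simp [pderiv_mul, pderiv_pow, pderiv_X, hC2, hC4, pderiv_C]
  all_goals (simp only [← hC2, ← hC4]; ring)

lemma div9 : divLM (PhiBDFM 9) = 2 * X 1 - 1 := by
  rw [show PhiBDFM 9 = (0, X 1 ^ 2 - X 1) from rfl, divLM_apply]
  simp [pderiv_mul, pderiv_pow, pderiv_X, hC2, hC4, pderiv_C]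
  all_goals (simp only [← hC2, ← hC4]; ring)

lemma mem_span3 (a b c : ℝ) :
    a • (1 : MvPolynomial (Fin 2) ℝ) + b • X 0 + c • X 1 ∈
      Submodule.span ℝ ({1, X 0, X 1} : Set (MvPolynomial (Fin 2) ℝ)) := by
  refine Submodule.add_mem _ (Submodule.add_mem _ ?_ ?_) ?_ <;>
    exact Submodule.smul_mem _ _ (Submodule.subset_span (by simp))

lemma comb_mem (p : MvPolynomial (Fin 2) ℝ) (a b c : ℝ)
    (h : p = a • (1 : MvPolynomial (Fin 2) ℝ) + b • X 0 + c • X 1) :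
    p ∈ Submodule.span ℝ ({1, X 0, X 1} : Set (MvPolynomial (Fin 2) ℝ)) :=
  h ▸ mem_span3 a b c

lemma span_eq_span3 :
    Submodule.span ℝ (⇑divLM '' Set.range PhiBDFM) =
      Submodule.span ℝ ({1, X 0, X 1} : Set (MvPolynomial (Fin 2) ℝ)) := by
  have hmemS : ∀ i : Fin 10, divLM (PhiBDFM i) ∈
      Submodule.span ℝ (⇑divLM '' Set.range PhiBDFM) :=
    fun i => Submodule.subset_span ⟨PhiBDFM i, ⟨i, rfl⟩, rfl⟩
  apply le_antisymm
  · rw [Submodule.span_le]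
    rintro x ⟨v, ⟨i, rfl⟩, rfl⟩
    fin_cases i
    · show divLM (PhiBDFM 0) ∈ _
      rw [div0]
      exact comb_mem _ 0 4 (-2) (by simp only [smul_eq_C_mul, map_ofNat, map_neg, map_zero]; ring)
    · show divLM (PhiBDFM 1) ∈ _
      rw [div1]
      exact comb_mem _ (-2) 4 2 (by simp only [smul_eq_C_mul, map_ofNat, map_neg]; ring)
    · show divLM (PhiBDFM 2) ∈ _
      rw [div2]
      exact comb_mem _ (-2) 2 4 (by simp only [smul_eq_C_mul, map_ofNat, map_neg]; ring)
    · show divLM (PhiBDFM 3) ∈ _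
      rw [div3]
      exact comb_mem _ 0 (-2) 4 (by simp only [smul_eq_C_mul, map_ofNat, map_neg, map_zero]; ring)
    · show divLM (PhiBDFM 4) ∈ _
      rw [div4]
      exact comb_mem _ 2 (-4) 2 (by simp only [smul_eq_C_mul, map_ofNat, map_neg]; ring)
    · show divLM (PhiBDFM 5) ∈ _
      rw [div5]
      exact comb_mem _ 4 (-4) (-2) (by simp only [smul_eq_C_mul, map_ofNat, map_neg]; ring)
    · show divLM (PhiBDFM 6) ∈ _
      rw [div6]
      exact comb_mem _ 4 (-2) (-4) (by simp only [smul_eq_C_mul, map_ofNat, map_neg]; ring)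
    · show divLM (PhiBDFM 7) ∈ _
      rw [div7]
      exact comb_mem _ 2 2 (-4) (by simp only [smul_eq_C_mul, map_ofNat, map_neg]; ring)
    · show divLM (PhiBDFM 8) ∈ _
      rw [div8]
      exact comb_mem _ (-1) 2 0 (by simp only [smul_eq_C_mul, map_ofNat, map_neg, map_one, map_zero]; ring)
    · show divLM (PhiBDFM 9) ∈ _
      rw [div9]
      exact comb_mem _ (-1) 0 2 (by simp only [smul_eq_C_mul, map_ofNat, map_neg, map_one, map_zero]; ring)
  · rw [Submodule.span_le]
    intro x hx
    simp only [Set.mem_insert_iff, Set.mem_singleton_iff] at hx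
    rcases hx with rfl | rfl | rfl
    · have e1 : (1 : MvPolynomial (Fin 2) ℝ) =
          divLM (PhiBDFM 9) + divLM (PhiBDFM 0) - divLM (PhiBDFM 8) - divLM (PhiBDFM 8) := by
        rw [div9, div0, div8]; ring
      rw [e1]
      exact sub_mem (sub_mem (add_mem (hmemS 9) (hmemS 0)) (hmemS 8)) (hmemS 8)
    · have h2x : divLM (PhiBDFM 9) + divLM (PhiBDFM 0) - divLM (PhiBDFM 8)
          = (2:ℝ) • X 0 := by
        rw [div9, div0, div8]
        simp only [smul_eq_C_mul, map_ofNat]; ring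
      have e2 : (X 0 : MvPolynomial (Fin 2) ℝ) =
          ((1:ℝ)/2) • (divLM (PhiBDFM 9) + divLM (PhiBDFM 0) - divLM (PhiBDFM 8)) := by
        rw [h2x, smul_smul]; norm_num
      rw [e2]
      exact Submodule.smul_mem _ _ (sub_mem (add_mem (hmemS 9) (hmemS 0)) (hmemS 8))
    · have h2y : divLM (PhiBDFM 8) - divLM (PhiBDFM 9) + divLM (PhiBDFM 3)
          = (2:ℝ) • X 1 := by
        rw [div8, div9, div3]
        simp only [smul_eq_C_mul, map_ofNat]; ring
      have e3 : (X 1 : MvPolynomial (Fin 2) ℝ) =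
          ((1:ℝ)/2) • (divLM (PhiBDFM 8) - divLM (PhiBDFM 9) + divLM (PhiBDFM 3)) := by
        rw [h2y, smul_smul]; norm_num
      rw [e3]
      exact Submodule.smul_mem _ _ (add_mem (sub_mem (hmemS 8) (hmemS 9)) (hmemS 3))

lemma span3_coe :
    (Submodule.span ℝ ({1, X 0, X 1} : Set (MvPolynomial (Fin 2) ℝ)) :
        Set (MvPolynomial (Fin 2) ℝ)) =
      {q : MvPolynomial (Fin 2) ℝ | q.totalDegree ≤ 1} := by
  ext q
  simp only [SetLike.mem_coe, Set.mem_setOf_eq]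
  constructor
  · intro hq
    have hT : Submodule.span ℝ ({1, X 0, X 1} : Set (MvPolynomial (Fin 2) ℝ)) ≤
        restrictTotalDegree (Fin 2) ℝ 1 := by
      rw [Submodule.span_le]
      intro x hx
      simp only [Set.mem_insert_iff, Set.mem_singleton_iff] at hx
      rcases hx with rfl | rfl | rfl <;>
        simp [SetLike.mem_coe, mem_restrictTotalDegree, totalDegree_X, totalDegree_one]
    exact (mem_restrictTotalDegree _ _ _).1 (hT hq)
  · intro hq
    rw [q.as_sum]
    refine Submodule.sum_mem _ fun d hd => ?_
    have hle : (d.sum fun _ e => e) ≤ 1 := le_trans (le_totalDegree hd) hq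
    have hsum : d 0 + d 1 ≤ 1 := by
      rwa [Finsupp.sum_fintype _ _ (fun _ => rfl), Fin.sum_univ_two] at hle
    have hcases : (d 0 = 0 ∧ d 1 = 0) ∨ (d 0 = 1 ∧ d 1 = 0) ∨ (d 0 = 0 ∧ d 1 = 1) := by
      omega
    rcases hcases with ⟨h0, h1⟩ | ⟨h0, h1⟩ | ⟨h0, h1⟩
    · have hd0 : d = 0 := Finsupp.ext fun i => by fin_cases i <;> simpa using by assumption
      rw [hd0]
      have : monomial (0 : Fin 2 →₀ ℕ) (coeff 0 q) = coeff 0 q • (1 : MvPolynomial (Fin 2) ℝ) := by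
        rw [monomial_zero', smul_eq_C_mul, mul_one]
      rw [this]
      exact Submodule.smul_mem _ _ (Submodule.subset_span (by simp))
    · have hd0 : d = Finsupp.single 0 1 :=
        Finsupp.ext fun i => by fin_cases i <;> simp [Finsupp.single_apply, h0, h1]
      subst hd0
      have : monomial (Finsupp.single (0 : Fin 2) 1) (coeff (Finsupp.single (0 : Fin 2) 1) q)
          = coeff (Finsupp.single (0 : Fin 2) 1) q • (X 0 : MvPolynomial (Fin 2) ℝ) := by
        rw [monomial_eq, smul_eq_C_mul]
        simp
      rw [this]
      exact Submodule.smul_mem _ _ (Submodule.subset_span (by simp))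
    · have hd0 : d = Finsupp.single 1 1 :=
        Finsupp.ext fun i => by fin_cases i <;> simp [Finsupp.single_apply, h0, h1]
      subst hd0
      have : monomial (Finsupp.single (1 : Fin 2) 1) (coeff (Finsupp.single (1 : Fin 2) 1) q)
          = coeff (Finsupp.single (1 : Fin 2) 1) q • (X 1 : MvPolynomial (Fin 2) ℝ) := by
        rw [monomial_eq, smul_eq_C_mul]
        simp
      rw [this]
      exact Submodule.smul_mem _ _ (Submodule.subset_span (by simp))

/-- The divergences of elements of `BDFM₂(T̂) = span{Φ₁,…,Φ₁₀}` are exactly the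
polynomials of total degree at most `1`: `div BDFM₂ = P₁`. -/
theorem bdfm2_div_eq_P1 :
    (fun v : MvPolynomial (Fin 2) ℝ × MvPolynomial (Fin 2) ℝ =>
        pderiv 0 v.1 + pderiv 1 v.2) ''
      (Submodule.span ℝ (Set.range PhiBDFM) :
        Set (MvPolynomial (Fin 2) ℝ × MvPolynomial (Fin 2) ℝ)) =
      {q : MvPolynomial (Fin 2) ℝ | q.totalDegree ≤ 1} := by
  have h1 : (fun v : MvPolynomial (Fin 2) ℝ × MvPolynomial (Fin 2) ℝ =>
      pderiv 0 v.1 + pderiv 1 v.2) = ⇑divLM := by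
    funext v; rw [divLM_apply]
  rw [h1, ← Submodule.map_coe, Submodule.map_span, span_eq_span3, span3_coe]
end

section
/- The set { ∂v₁/∂x + ∂v₂/∂y + ∂v₃/∂z : (v₁,v₂,v₃) ∈ span_ℝ{Φ₁,…,Φ₁₅} } of divergences of elements of the span of Φ₁,…,Φ₁₅ equals P₁(ℝ³), the space of real polynomials in x, y, z of total degree at most 1; that is, div RTN₁(T̂) = P₁. -/
open MvPolynomial

/-- `Φ₁₃ = (x²−x, xy, xz)`. -/
noncomputable def P13 : Fin 3 → MvPolynomial (Fin 3) ℝ :=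
  ![X 0 ^ 2 - X 0, X 0 * X 1, X 0 * X 2]

/-- `Φ₁₄ = (xy, y²−y, yz)`. -/
noncomputable def P14 : Fin 3 → MvPolynomial (Fin 3) ℝ :=
  ![X 0 * X 1, X 1 ^ 2 - X 1, X 1 * X 2]

/-- `Φ₁₅ = (xz, yz, z²−z)`. -/
noncomputable def P15 : Fin 3 → MvPolynomial (Fin 3) ℝ :=
  ![X 0 * X 2, X 1 * X 2, X 2 ^ 2 - X 2]

/-- The fifteen `RTN₁` basis functions on the reference tetrahedron, as
vector-valued polynomials in `ℝ[x,y,z]³` (`x = X 0`, `y = X 1`, `z = X 2`). -/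
noncomputable def PhiRTN : Fin 15 → (Fin 3 → MvPolynomial (Fin 3) ℝ) :=
  ![![X 0, 0, 0] + 2 • P13 + P14 + P15,
    ![0, X 1, 0] + P13 + 2 • P14 + P15,
    ![0, 0, X 2] + P13 + P14 + 2 • P15,
    ![-X 1, X 1, 0] - P13 + P14,
    ![-X 2, 0, X 2] - P13 + P15,
    ![X 0 + X 1 + X 2 - 1, 0, 0] - 2 • P13 - P14 - P15,
    ![0, -X 2, X 2] - P14 + P15,
    ![0, X 0 + X 1 + X 2 - 1, 0] - P13 - 2 • P14 - P15,
    ![X 0, -X 0, 0] + P13 - P14,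
    ![0, 0, X 0 + X 1 + X 2 - 1] - P13 - P14 - 2 • P15,
    ![X 0, 0, -X 0] + P13 - P15,
    ![0, X 1, -X 1] + P14 - P15,
    P13, P14, P15]

/-- The divergence, as a linear map on vector-valued polynomials. -/
noncomputable def divL : (Fin 3 → MvPolynomial (Fin 3) ℝ) →ₗ[ℝ] MvPolynomial (Fin 3) ℝ where
  toFun v := pderiv 0 (v 0) + pderiv 1 (v 1) + pderiv 2 (v 2)
  map_add' u v := by simp [Pi.add_apply]; ring
  map_smul' c v := by simp [Pi.smul_apply, smul_add]

lemma pderiv_two (i : Fin 3) : pderiv i (2 : MvPolynomial (Fin 3) ℝ) = 0 := by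
  rw [show (2 : MvPolynomial (Fin 3) ℝ) = C 2 from (map_ofNat C 2).symm, pderiv_C]

lemma deg_le_aux (a b c d : ℝ) :
    (C a + C b * X 0 + C c * X 1 + C d * X 2 : MvPolynomial (Fin 3) ℝ).totalDegree ≤ 1 := by
  have h1 : ∀ (e : ℝ) (i : Fin 3), (C e * X i : MvPolynomial (Fin 3) ℝ).totalDegree ≤ 1 := by
    intro e i
    exact (totalDegree_mul _ _).trans (by simp [totalDegree_X])
  exact (totalDegree_add _ _).trans (max_le ((totalDegree_add _ _).trans
    (max_le ((totalDegree_add _ _).trans (max_le (by simp) (h1 b 0))) (h1 c 1))) (h1 d 2))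

lemma deg_le_aux' (p : MvPolynomial (Fin 3) ℝ) (a b c d : ℝ)
    (h : p = C a + C b * X 0 + C c * X 1 + C d * X 2) : p.totalDegree ≤ 1 :=
  h ▸ deg_le_aux a b c d

lemma quarter (i : Fin 3) :
    ((1/4 : ℝ)) • (4 * X i - 1 + 1 : MvPolynomial (Fin 3) ℝ) = X i := by
  rw [smul_eq_C_mul]
  ring_nf
  rw [show (4 : MvPolynomial (Fin 3) ℝ) = C 4 from (map_ofNat C 4).symm, mul_comm,
    ← mul_assoc, ← C_mul]
  norm_num

set_option maxHeartbeats 2000000 in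
/-- The divergences of elements of `RTN₁(T̂) = span{Φ₁,…,Φ₁₅}` are exactly the
polynomials of total degree at most `1`: `div RTN₁ = P₁`. -/
theorem rtn1_div_eq_P1 :
    (fun v : Fin 3 → MvPolynomial (Fin 3) ℝ =>
        pderiv 0 (v 0) + pderiv 1 (v 1) + pderiv 2 (v 2)) ''
      (Submodule.span ℝ (Set.range PhiRTN) : Set (Fin 3 → MvPolynomial (Fin 3) ℝ)) =
      {q : MvPolynomial (Fin 3) ℝ | q.totalDegree ≤ 1} := by
  set S : Submodule ℝ (MvPolynomial (Fin 3) ℝ) :=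
    Submodule.map divL (Submodule.span ℝ (Set.range PhiRTN)) with hS
  have hmem : ∀ i : Fin 15, divL (PhiRTN i) ∈ S := fun i =>
    Submodule.mem_map_of_mem (Submodule.subset_span ⟨i, rfl⟩)
  -- the constant 1 is in S
  have hsum : divL (PhiRTN 0) + divL (PhiRTN 5) = 2 := by
    show divL (![X 0, 0, 0] + 2 • P13 + P14 + P15) +
      divL (![X 0 + X 1 + X 2 - 1, 0, 0] - 2 • P13 - P14 - P15) = 2
    simp [divL, P13, P14, P15, pderiv_two]
    ring
  have h1 : (1 : MvPolynomial (Fin 3) ℝ) ∈ S := by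
    have := S.smul_mem (1/2 : ℝ) (S.add_mem (hmem 0) (hmem 5))
    rwa [hsum, smul_eq_C_mul, show (2 : MvPolynomial (Fin 3) ℝ) = C 2 from (map_ofNat C 2).symm,
      ← C_mul, show (1/2 : ℝ) * 2 = 1 by norm_num, C_1] at this
  -- each variable is in S
  have hd12 : divL (PhiRTN 12) = 4 * X 0 - 1 := by
    show divL P13 = _
    simp [divL, P13]; ring
  have hd13 : divL (PhiRTN 13) = 4 * X 1 - 1 := by
    show divL P14 = _
    simp [divL, P14]; ring
  have hd14 : divL (PhiRTN 14) = 4 * X 2 - 1 := by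
    show divL P15 = _
    simp [divL, P15]; ring
  have hXmem : ∀ k : Fin 15, ∀ i : Fin 3, divL (PhiRTN k) = 4 * X i - 1 →
      (X i : MvPolynomial (Fin 3) ℝ) ∈ S := by
    intro k i hk
    have := S.smul_mem (1/4 : ℝ) (S.add_mem (hmem k) h1)
    rwa [hk, quarter i] at this
  have hX : ∀ i : Fin 3, (X i : MvPolynomial (Fin 3) ℝ) ∈ S := by
    intro i
    fin_cases i
    · exact hXmem 12 0 hd12
    · exact hXmem 13 1 hd13
    · exact hXmem 14 2 hd14
  have key : S = restrictTotalDegree (Fin 3) ℝ 1 := by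
    apply le_antisymm
    · rw [hS, Submodule.map_le_iff_le_comap, Submodule.span_le]
      rintro _ ⟨i, rfl⟩
      simp only [Submodule.mem_comap, SetLike.mem_coe, mem_restrictTotalDegree]
      fin_cases i
      · exact deg_le_aux' _ (-3) 8 4 4 (by
          show divL (![X 0, 0, 0] + 2 • P13 + P14 + P15) = _
          simp [divL, P13, P14, P15, pderiv_two, map_ofNat, map_neg]; ring)
      · exact deg_le_aux' _ (-3) 4 8 4 (by
          show divL (![0, X 1, 0] + P13 + 2 • P14 + P15) = _
          simp [divL, P13, P14, P15, pderiv_two, map_ofNat, map_neg]; ring)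
      · exact deg_le_aux' _ (-3) 4 4 8 (by
          show divL (![0, 0, X 2] + P13 + P14 + 2 • P15) = _
          simp [divL, P13, P14, P15, pderiv_two, map_ofNat, map_neg]; ring)
      · exact deg_le_aux' _ 1 (-4) 4 0 (by
          show divL (![-X 1, X 1, 0] - P13 + P14) = _
          simp [divL, P13, P14, P15, pderiv_two, map_ofNat, map_neg]; ring)
      · exact deg_le_aux' _ 1 (-4) 0 4 (by
          show divL (![-X 2, 0, X 2] - P13 + P15) = _
          simp [divL, P13, P14, P15, pderiv_two, map_ofNat, map_neg]; ring)
      · exact deg_le_aux' _ 5 (-8) (-4) (-4) (by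
          show divL (![X 0 + X 1 + X 2 - 1, 0, 0] - 2 • P13 - P14 - P15) = _
          simp [divL, P13, P14, P15, pderiv_two, map_ofNat, map_neg]; ring)
      · exact deg_le_aux' _ 1 0 (-4) 4 (by
          show divL (![0, -X 2, X 2] - P14 + P15) = _
          simp [divL, P13, P14, P15, pderiv_two, map_ofNat, map_neg]; ring)
      · exact deg_le_aux' _ 5 (-4) (-8) (-4) (by
          show divL (![0, X 0 + X 1 + X 2 - 1, 0] - P13 - 2 • P14 - P15) = _
          simp [divL, P13, P14, P15, pderiv_two, map_ofNat, map_neg]; ring)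
      · exact deg_le_aux' _ 1 4 (-4) 0 (by
          show divL (![X 0, -X 0, 0] + P13 - P14) = _
          simp [divL, P13, P14, P15, pderiv_two, map_ofNat, map_neg]; ring)
      · exact deg_le_aux' _ 5 (-4) (-4) (-8) (by
          show divL (![0, 0, X 0 + X 1 + X 2 - 1] - P13 - P14 - 2 • P15) = _
          simp [divL, P13, P14, P15, pderiv_two, map_ofNat, map_neg]; ring)
      · exact deg_le_aux' _ 1 4 0 (-4) (by
          show divL (![X 0, 0, -X 0] + P13 - P15) = _
          simp [divL, P13, P14, P15, pderiv_two, map_ofNat, map_neg]; ring)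
      · exact deg_le_aux' _ 1 0 4 (-4) (by
          show divL (![0, X 1, -X 1] + P14 - P15) = _
          simp [divL, P13, P14, P15, pderiv_two, map_ofNat, map_neg]; ring)
      · exact deg_le_aux' _ (-1) 4 0 0 (by
          show divL P13 = _
          simp [divL, P13, map_ofNat, map_neg]; ring)
      · exact deg_le_aux' _ (-1) 0 4 0 (by
          show divL P14 = _
          simp [divL, P14, map_ofNat, map_neg]; ring)
      · exact deg_le_aux' _ (-1) 0 0 4 (by
          show divL P15 = _
          simp [divL, P15, map_ofNat, map_neg]; ring)
    · intro p hp
      rw [mem_restrictTotalDegree] at hp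
      rw [p.as_sum]
      refine Submodule.sum_mem _ fun v hv => ?_
      have hdeg : v 0 + v 1 + v 2 ≤ 1 := by
        have h := (le_totalDegree hv).trans hp
        rwa [Finsupp.sum_fintype _ _ (fun _ => rfl), Fin.sum_univ_three] at h
      have hv3 : ∀ j : Fin 3, j = 0 ∨ j = 1 ∨ j = 2 := by decide
      have hcases : (v 0 = 0 ∧ v 1 = 0 ∧ v 2 = 0) ∨ (v 0 = 1 ∧ v 1 = 0 ∧ v 2 = 0) ∨
          (v 0 = 0 ∧ v 1 = 1 ∧ v 2 = 0) ∨ (v 0 = 0 ∧ v 1 = 0 ∧ v 2 = 1) := by omega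
      rcases hcases with ⟨e0, e1, e2⟩ | ⟨e0, e1, e2⟩ | ⟨e0, e1, e2⟩ | ⟨e0, e1, e2⟩
      · have hv0 : v = 0 := by
          ext j; rcases hv3 j with rfl | rfl | rfl <;> simpa
        rw [hv0, monomial_zero']
        simpa [smul_eq_C_mul] using S.smul_mem (coeff 0 p) h1
      · have hv0 : v = Finsupp.single 0 1 := by
          ext j; rcases hv3 j with rfl | rfl | rfl <;> simp [Finsupp.single_apply, e0, e1, e2]
        rw [hv0, monomial_eq, Finsupp.prod_single_index (by simp), pow_one, ← smul_eq_C_mul]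
        exact S.smul_mem _ (hX 0)
      · have hv0 : v = Finsupp.single 1 1 := by
          ext j; rcases hv3 j with rfl | rfl | rfl <;> simp [Finsupp.single_apply, e0, e1, e2]
        rw [hv0, monomial_eq, Finsupp.prod_single_index (by simp), pow_one, ← smul_eq_C_mul]
        exact S.smul_mem _ (hX 1)
      · have hv0 : v = Finsupp.single 2 1 := by
          ext j; rcases hv3 j with rfl | rfl | rfl <;> simp [Finsupp.single_apply, e0, e1, e2]
        rw [hv0, monomial_eq, Finsupp.prod_single_index (by simp), pow_one, ← smul_eq_C_mul]
        exact S.smul_mem _ (hX 2)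
  have hfun : (fun v : Fin 3 → MvPolynomial (Fin 3) ℝ =>
      pderiv 0 (v 0) + pderiv 1 (v 1) + pderiv 2 (v 2)) = ⇑divL := rfl
  rw [hfun, ← Submodule.map_coe, ← hS, key]
  ext q
  simp [mem_restrictTotalDegree]
end
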